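/- arXiv:1601.04937 — 2 statements merged into one kernel-verified Lean document; each statement's English description precedes it below -/
import Mathlib

section
/- The function f(x) = (3/(2√(2π))) · exp(-x²/2) · (1 - erf(x/√2)²) is a probability density: it is nonnegative and ∫_ℝ f(x) dx = 1. -/
/-!
With `g x = erf (x / √2)` one has `g' x = 2 / √(2π) · exp (-x²/2)`, so `f = (3/4) (1 - g²) g'` has
the primitive `(3/4) (g - g³/3)`. Since `g → ±1` at `±∞`, the integral is
`(3/4) (2/3) - (3/4) (-2/3) = 1`. Nonnegativity is `|erf| ≤ 1`, which holds because `erf` increases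
from `-1` to `1`.
-/

open Real MeasureTheory

noncomputable def erf (x : ℝ) : ℝ := 2 / Real.sqrt π * ∫ s in (0:ℝ)..x, Real.exp (-s^2)

noncomputable def f (x : ℝ) : ℝ :=
  (3 / (2 * Real.sqrt (2*π))) * Real.exp (-x^2/2) * (1 - erf (x / Real.sqrt 2)^2)

open Filter Topology

lemma hasDerivAt_erf (x : ℝ) : HasDerivAt erf (2 / √π * exp (-x ^ 2)) x := by
  have hcont : Continuous fun s : ℝ ↦ exp (-s ^ 2) := by fun_prop
  exact (intervalIntegral.integral_hasDerivAt_right (hcont.intervalIntegrable _ _)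
    (hcont.stronglyMeasurableAtFilter _ _) hcont.continuousAt).const_mul _

lemma strictMono_erf : StrictMono erf :=
  strictMono_of_hasDerivAt_pos hasDerivAt_erf fun x ↦ by positivity

lemma erf_neg (x : ℝ) : erf (-x) = -erf x := by
  have h := intervalIntegral.integral_comp_neg (a := x) (b := 0) fun s : ℝ ↦ exp (-s ^ 2)
  simp only [neg_sq, neg_zero] at h
  rw [erf, erf, ← h, intervalIntegral.integral_symm, mul_neg]

lemma tendsto_erf_atTop : Tendsto erf atTop (𝓝 1) := by
  have hint : IntegrableOn (fun s : ℝ ↦ exp (-s ^ 2)) (Set.Ioi 0) := by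
    simpa using (integrable_exp_neg_mul_sq one_pos).integrableOn
  have hval : ∫ s in Set.Ioi (0 : ℝ), exp (-s ^ 2) = √π / 2 := by
    simpa using integral_gaussian_Ioi 1
  have h := (intervalIntegral_tendsto_integral_Ioi 0 hint tendsto_id).const_mul (2 / √π)
  rwa [hval, div_mul_div_cancel₀ (sqrt_pos.2 pi_pos).ne', div_self two_ne_zero] at h

lemma tendsto_erf_atBot : Tendsto erf atBot (𝓝 (-1)) := by
  have : erf = fun x ↦ -erf (-x) := by ext; simp [erf_neg]
  rw [this]
  exact (tendsto_erf_atTop.comp tendsto_neg_atBot_atTop).neg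

lemma abs_erf_le_one (x : ℝ) : |erf x| ≤ 1 :=
  abs_le.2 ⟨strictMono_erf.monotone.le_of_tendsto tendsto_erf_atBot x,
    strictMono_erf.monotone.ge_of_tendsto tendsto_erf_atTop x⟩

lemma erf_sq_le_one (x : ℝ) : erf x ^ 2 ≤ 1 :=
  (sq_le_one_iff_abs_le_one _).2 (abs_erf_le_one x)

lemma hasDerivAt_erf_div_sqrt_two (x : ℝ) :
    HasDerivAt (fun x ↦ erf (x / √2)) (2 / √(2 * π) * exp (-x ^ 2 / 2)) x := by
  have h := (hasDerivAt_erf (x / √2)).comp x ((hasDerivAt_id x).div_const √2)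
  have e : 2 / √π * exp (-(x / √2) ^ 2) * (1 / √2) = 2 / √(2 * π) * exp (-x ^ 2 / 2) := by
    rw [div_pow, sq_sqrt zero_le_two, sqrt_mul zero_le_two, neg_div]
    field_simp
  rw [e] at h
  exact h

lemma f_nonneg (x : ℝ) : 0 ≤ f x :=
  mul_nonneg (by positivity) (sub_nonneg.2 (erf_sq_le_one _))

lemma f_le_gaussian (x : ℝ) : f x ≤ 3 / (2 * √(2 * π)) * exp (-(1 / 2) * x ^ 2) := by
  rw [f, show -(1 / 2) * x ^ 2 = -x ^ 2 / 2 by ring]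
  exact mul_le_of_le_one_right (by positivity) (by linarith [sq_nonneg (erf (x / √2))])

lemma continuous_f : Continuous f := by
  have : Continuous fun x ↦ erf (x / √2) :=
    continuous_iff_continuousAt.2 fun x ↦ (hasDerivAt_erf_div_sqrt_two x).continuousAt
  unfold f
  fun_prop

lemma integrable_f : Integrable f :=
  ((integrable_exp_neg_mul_sq (by norm_num : (0 : ℝ) < 1 / 2)).const_mul _).mono'
    continuous_f.aestronglyMeasurable
    (.of_forall fun x ↦ by rw [norm_of_nonneg (f_nonneg x)]; exact f_le_gaussian x)

lemma hasDerivAt_f_primitive (x : ℝ) :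
    HasDerivAt (fun x ↦ 3 / 4 * (erf (x / √2) - erf (x / √2) ^ 3 / 3)) (f x) x := by
  have hg := hasDerivAt_erf_div_sqrt_two x
  refine ((hg.sub ((hg.pow 3).div_const 3)).const_mul (3 / 4 : ℝ)).congr_deriv ?_
  unfold f
  field_simp
  ring

theorem f_is_density : (∀ x, 0 ≤ f x) ∧ ∫ x : ℝ, f x = 1 := by
  refine ⟨f_nonneg, ?_⟩
  have hg_top := tendsto_erf_atTop.comp (tendsto_id.atTop_div_const (sqrt_pos.2 two_pos))
  have hg_bot := tendsto_erf_atBot.comp (tendsto_id.atBot_div_const (sqrt_pos.2 two_pos))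
  rw [integral_of_hasDerivAt_of_tendsto hasDerivAt_f_primitive integrable_f
    ((hg_bot.sub ((hg_bot.pow 3).div_const 3)).const_mul _)
    ((hg_top.sub ((hg_top.pow 3).div_const 3)).const_mul _)]
  norm_num
end

section
/- Let A, B, C be i.i.d. standard Gaussian points in ℝ². The expected area of the triangle ABC equals √3/2. -/
/-!
The area is `|cross (B - A) (C - A)| / 2`. The law of a pair of i.i.d. centred Gaussian vectors is
invariant under rotations of the pair. Substituting `(A, B) = R_{π/4} (S, X)` makes
`B - A = -√2 S`, so `cross (B - A) (C - A) = -√2 cross S (C - X / √2)`; substituting then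
`(X, C) = R_θ (U, V)` with `tan θ = √2` makes `C - X / √2 = -√(3/2) U`. Hence the doubled area is
`√3 |cross S U|` with `S, U` independent standard Gaussian vectors of the plane. For fixed `U`,
`cross S U` is centred normal with variance `‖U‖²`, so
`E |cross S U| = E |N(0,1)| · E ‖U‖ = √(2/π) · √(π/2) = 1`.
-/

open Real MeasureTheory ProbabilityTheory

noncomputable def μ6 : Measure ((ℝ × ℝ) × (ℝ × ℝ) × (ℝ × ℝ)) :=
  (((gaussianReal 0 1).prod (gaussianReal 0 1)).prod
    (((gaussianReal 0 1).prod (gaussianReal 0 1)).prod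
      ((gaussianReal 0 1).prod (gaussianReal 0 1))))

open scoped ENNReal NNReal

section Rotation

variable {E : Type*} [NormedAddCommGroup E] [NormedSpace ℝ E]

noncomputable def rotate₁₂ (θ : ℝ) (p : E × E × E) : E × E × E :=
  ((ContinuousLinearMap.rotation θ (p.1, p.2.1)).1,
    (ContinuousLinearMap.rotation θ (p.1, p.2.1)).2, p.2.2)

noncomputable def rotate₂₃ (θ : ℝ) (p : E × E × E) : E × E × E :=
  (p.1, ContinuousLinearMap.rotation θ p.2)

variable [MeasurableSpace E] [BorelSpace E] [SecondCountableTopology E] [CompleteSpace E]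
  {μ : Measure E} [IsGaussian μ]

lemma measurePreserving_rotation (hμ : μ[id] = 0) (θ : ℝ) :
    MeasurePreserving (ContinuousLinearMap.rotation θ) (μ.prod μ) (μ.prod μ) :=
  ⟨(ContinuousLinearMap.rotation θ).continuous.measurable, IsGaussian.map_rotation_eq_self hμ θ⟩

lemma measurePreserving_rotate₁₂ (hμ : μ[id] = 0) (θ : ℝ) :
    MeasurePreserving (rotate₁₂ θ) (μ.prod (μ.prod μ)) (μ.prod (μ.prod μ)) :=
  (measurePreserving_prodAssoc μ μ μ).comp
    (((measurePreserving_rotation hμ θ).prod (MeasurePreserving.id μ)).comp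
      (measurePreserving_prodAssoc μ μ μ).symm)

lemma measurePreserving_rotate₂₃ (hμ : μ[id] = 0) (θ : ℝ) :
    MeasurePreserving (rotate₂₃ θ) (μ.prod (μ.prod μ)) (μ.prod (μ.prod μ)) :=
  (MeasurePreserving.id μ).prod (measurePreserving_rotation hμ θ)

end Rotation

lemma lintegral_comp_fst_fst_snd {α β γ : Type*} [MeasurableSpace α] [MeasurableSpace β]
    [MeasurableSpace γ] {μ : Measure α} {ν : Measure β} {ρ : Measure γ} [SFinite μ] [SFinite ν]
    [IsProbabilityMeasure ρ] {f : α × β → ℝ≥0∞} (hf : Measurable f) :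
    ∫⁻ p, f (p.1, p.2.1) ∂(μ.prod (ν.prod ρ)) = ∫⁻ q, f q ∂(μ.prod ν) := by
  rw [← (measurePreserving_prodAssoc μ ν ρ).lintegral_comp (by fun_prop)]
  change ∫⁻ q, f q.1 ∂((μ.prod ν).prod ρ) = _
  rw [← lintegral_map hf measurable_fst, Measure.map_fst_prod, measure_univ, one_smul]

lemma integral_id_gaussianReal_prod (m₁ m₂ : ℝ) (v₁ v₂ : ℝ≥0) :
    ((gaussianReal m₁ v₁).prod (gaussianReal m₂ v₂))[id] = (m₁, m₂) := by
  have h := IsGaussian.integrable_id (μ := (gaussianReal m₁ v₁).prod (gaussianReal m₂ v₂))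
  ext
  · rw [fst_integral h]
    simpa using integral_fun_fst (μ := gaussianReal m₁ v₁) (ν := gaussianReal m₂ v₂) id
  · rw [snd_integral h]
    simpa using integral_fun_snd (μ := gaussianReal m₁ v₁) (ν := gaussianReal m₂ v₂) id

lemma map_linearCombination_gaussianReal_prod (a b m₁ m₂ : ℝ) (v₁ v₂ : ℝ≥0) :
    ((gaussianReal m₁ v₁).prod (gaussianReal m₂ v₂)).map (fun x ↦ a * x.1 + b * x.2)
      = gaussianReal (a * m₁ + b * m₂)
          (.mk (a ^ 2) (sq_nonneg a) * v₁ + .mk (b ^ 2) (sq_nonneg b) * v₂) := by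
  rw [← gaussianReal_conv_gaussianReal, ← gaussianReal_map_const_mul,
    ← gaussianReal_map_const_mul, Measure.conv,
    Measure.map_prod_map _ _ (by fun_prop) (by fun_prop),
    Measure.map_map (by fun_prop) (by fun_prop)]
  rfl

lemma gaussianPDFReal_zero_one (x : ℝ) :
    gaussianPDFReal 0 1 x = (√(2 * π))⁻¹ * rexp (-x ^ 2 / 2) := by
  simp [gaussianPDFReal]

lemma integral_Ioi_mul_exp_neg_sq_div_two :
    ∫ x in Set.Ioi (0 : ℝ), x * rexp (-x ^ 2 / 2) = 1 := by
  have h := integral_rpow_mul_exp_neg_mul_rpow (p := 2) (q := 1) (b := 1 / 2)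
    (by norm_num) (by norm_num) (by norm_num)
  norm_num [rpow_two, rpow_neg_one] at h
  simpa [neg_div, div_eq_inv_mul] using h

lemma integral_abs_gaussianReal_zero_one : ∫ x, |x| ∂(gaussianReal 0 1) = √(2 / π) := by
  have h2 : √2 ^ 2 = 2 := sq_sqrt zero_le_two
  have habs := integral_comp_abs (f := fun t ↦ (√(2 * π))⁻¹ * rexp (-t ^ 2 / 2) * t)
  simp only [sq_abs] at habs
  rw [integral_gaussianReal_eq_integral_smul one_ne_zero]
  simp_rw [gaussianPDFReal_zero_one, smul_eq_mul]
  rw [habs]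
  simp_rw [mul_assoc, integral_const_mul, mul_comm (rexp _), integral_Ioi_mul_exp_neg_sq_div_two,
    sqrt_div' _ pi_pos.le, sqrt_mul zero_le_two]
  field_simp
  linarith

lemma lintegral_abs_gaussianReal (v : ℝ≥0) :
    ∫⁻ x, ENNReal.ofReal |x| ∂(gaussianReal 0 v) = ENNReal.ofReal (√v * √(2 / π)) := by
  have hv : gaussianReal 0 v = (gaussianReal 0 1).map (√v * ·) := by
    rw [gaussianReal_map_const_mul]
    congr 1
    · simp
    · ext; simp
  have hint : Integrable (fun x ↦ |x|) (gaussianReal 0 1) := IsGaussian.integrable_id.abs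
  rw [hv, lintegral_map (by fun_prop) (by fun_prop)]
  simp_rw [abs_mul, abs_of_nonneg (sqrt_nonneg _), ENNReal.ofReal_mul (sqrt_nonneg _)]
  rw [lintegral_const_mul _ (by fun_prop), ← ofReal_integral_eq_lintegral_ofReal hint
    (ae_of_all _ fun _ ↦ abs_nonneg _), integral_abs_gaussianReal_zero_one]

lemma lintegral_abs_linearCombination_gaussianReal_prod (a b : ℝ) :
    ∫⁻ x, ENNReal.ofReal |a * x.1 + b * x.2| ∂((gaussianReal 0 1).prod (gaussianReal 0 1))
      = ENNReal.ofReal (√(a ^ 2 + b ^ 2) * √(2 / π)) := by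
  rw [← lintegral_map (f := fun t ↦ ENNReal.ofReal |t|) (by fun_prop) (by fun_prop),
    map_linearCombination_gaussianReal_prod, mul_zero, mul_zero, add_zero,
    lintegral_abs_gaussianReal]
  simp

lemma integral_norm_mul_exp_neg_norm_sq_div_two :
    ∫ w : ℂ, ‖w‖ * rexp (-‖w‖ ^ 2 / 2) = π * √(2 * π) := by
  have h := Complex.integral_rpow_mul_exp_neg_mul_rpow (p := 2) (q := 1) (b := 1 / 2)
    (by norm_num) (by norm_num) (by norm_num)
  have hΓ : Gamma (3 / 2) = √π / 2 := by
    rw [show (3 / 2 : ℝ) = (0 : ℕ) + 1 + 1 / 2 by norm_num, Gamma_nat_add_one_add_half]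
    norm_num
  have h2 : (1 / 2 : ℝ) ^ (-(1 + 2) / 2 : ℝ) = 2 * √2 := by
    rw [show (-(1 + 2) / 2 : ℝ) = -(1 + 1 / 2) by norm_num, sqrt_eq_rpow, one_div (2 : ℝ),
      inv_rpow zero_le_two, ← rpow_neg zero_le_two, neg_neg, rpow_add zero_lt_two, rpow_one]
  simp only [rpow_one, rpow_two] at h
  rw [show (1 + 2 : ℝ) / 2 = 3 / 2 by norm_num, hΓ, h2] at h
  convert h using 1
  · simp_rw [neg_div, div_eq_inv_mul, neg_mul]
    norm_num
  · rw [sqrt_mul zero_le_two]; ring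

lemma gaussianReal_prod_eq_withDensity :
    (gaussianReal 0 1).prod (gaussianReal 0 1) = volume.withDensity
      (fun z : ℝ × ℝ ↦ ENNReal.ofReal ((2 * π)⁻¹ * rexp (-(z.1 ^ 2 + z.2 ^ 2) / 2))) := by
  rw [gaussianReal_of_var_ne_zero 0 one_ne_zero, prod_withDensity (measurable_gaussianPDF 0 1)
    (measurable_gaussianPDF 0 1), ← Measure.volume_eq_prod]
  congr with z
  rw [gaussianPDF, gaussianPDF, ← ENNReal.ofReal_mul (gaussianPDFReal_nonneg 0 1 _),
    gaussianPDFReal_zero_one, gaussianPDFReal_zero_one]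
  congr 1
  rw [mul_mul_mul_comm, ← exp_add, ← mul_inv, ← sqrt_mul (by positivity),
    sqrt_mul_self (by positivity)]
  ring_nf

lemma lintegral_sqrt_gaussianReal_prod :
    ∫⁻ z, ENNReal.ofReal √(z.1 ^ 2 + z.2 ^ 2) ∂((gaussianReal 0 1).prod (gaussianReal 0 1))
      = ENNReal.ofReal √(π / 2) := by
  have hint : Integrable (fun w : ℂ ↦ ‖w‖ * rexp (-‖w‖ ^ 2 / 2)) :=
    .of_integral_ne_zero (by rw [integral_norm_mul_exp_neg_norm_sq_div_two]; positivity)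
  rw [gaussianReal_prod_eq_withDensity,
    lintegral_withDensity_eq_lintegral_mul _ (by fun_prop) (by fun_prop),
    ← Complex.volume_preserving_equiv_real_prod.lintegral_comp_emb
      Complex.measurableEquivRealProd.measurableEmbedding]
  calc _ = ∫⁻ w : ℂ, ENNReal.ofReal ((2 * π)⁻¹ * (‖w‖ * rexp (-‖w‖ ^ 2 / 2))) := by
        refine lintegral_congr fun w ↦ ?_
        rw [Pi.mul_apply, ← ENNReal.ofReal_mul (by positivity), Complex.norm_def,
          sq_sqrt (Complex.normSq_nonneg w), Complex.normSq_apply]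
        simp only [Complex.measurableEquivRealProd_apply]
        ring_nf
    _ = ENNReal.ofReal √(π / 2) := by
      rw [← ofReal_integral_eq_lintegral_ofReal (hint.const_mul _)
        (ae_of_all _ fun _ ↦ by positivity), integral_const_mul,
        integral_norm_mul_exp_neg_norm_sq_div_two,
        show π / 2 = 2 * π / 2 ^ 2 by ring, sqrt_div' _ (by positivity), sqrt_sq zero_le_two]
      congr 1
      field_simp

def cross (u v : ℝ × ℝ) : ℝ := u.1 * v.2 - u.2 * v.1

lemma lintegral_abs_cross_gaussianReal_prod :
    ∫⁻ z, ENNReal.ofReal |cross z.1 z.2| ∂(((gaussianReal 0 1).prod (gaussianReal 0 1)).prod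
      ((gaussianReal 0 1).prod (gaussianReal 0 1))) = 1 := by
  rw [lintegral_prod_symm _ (by unfold cross; fun_prop)]
  calc _ = ∫⁻ v, ENNReal.ofReal √(2 / π) * ENNReal.ofReal √(v.1 ^ 2 + v.2 ^ 2)
          ∂((gaussianReal 0 1).prod (gaussianReal 0 1)) := by
        refine lintegral_congr fun v ↦ ?_
        have h := lintegral_abs_linearCombination_gaussianReal_prod v.2 (-v.1)
        rw [neg_sq, add_comm (v.2 ^ 2), mul_comm, ENNReal.ofReal_mul (sqrt_nonneg _)] at h
        simpa [cross, mul_comm, ← sub_eq_add_neg] using h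
    _ = 1 := by
      rw [lintegral_const_mul _ (by fun_prop), lintegral_sqrt_gaussianReal_prod,
        ← ENNReal.ofReal_mul (sqrt_nonneg _), ← sqrt_mul (by positivity)]
      field_simp
      simp

def doubleSignedArea (p : (ℝ × ℝ) × (ℝ × ℝ) × (ℝ × ℝ)) : ℝ := cross (p.2.1 - p.1) (p.2.2 - p.1)

lemma doubleSignedArea_rotate (p : (ℝ × ℝ) × (ℝ × ℝ) × (ℝ × ℝ)) :
    doubleSignedArea (rotate₁₂ (π / 4) (rotate₂₃ (arctan √2) p)) = √3 * cross p.1 p.2.1 := by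
  obtain ⟨S, U, V⟩ := p
  have h2 : √2 ^ 2 = 2 := sq_sqrt zero_le_two
  have h3 : √3 ^ 2 = 3 := sq_sqrt zero_le_three
  have h12 : √(1 + √2 ^ 2) = √3 := by rw [h2]; norm_num
  simp only [doubleSignedArea, rotate₁₂, rotate₂₃, ContinuousLinearMap.rotation_apply,
    cos_pi_div_four, sin_pi_div_four, cos_arctan, sin_arctan, h12, cross, Prod.fst_add,
    Prod.snd_add, Prod.fst_sub, Prod.snd_sub, Prod.smul_fst, Prod.smul_snd, smul_eq_mul]
  field_simp
  linear_combination
    (6 * √3 * (S.1 * U.2 - U.1 * S.2) + 2 * √2 * √3 * (S.1 * V.2 - S.2 * V.1)) * h2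
      - 4 * √3 * (S.1 * U.2 - U.1 * S.2) * h3

lemma lintegral_abs_doubleSignedArea :
    ∫⁻ p, ENNReal.ofReal |doubleSignedArea p| ∂μ6 = ENNReal.ofReal √3 := by
  have hγ := integral_id_gaussianReal_prod 0 0 1 1
  have hR₁ : MeasurePreserving (rotate₁₂ (π / 4)) μ6 μ6 := measurePreserving_rotate₁₂ hγ _
  have hR₂ : MeasurePreserving (rotate₂₃ (arctan √2)) μ6 μ6 := measurePreserving_rotate₂₃ hγ _
  have hmarg : ∫⁻ p, ENNReal.ofReal |cross p.1 p.2.1| ∂μ6 = 1 :=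
    (lintegral_comp_fst_fst_snd (f := fun q ↦ ENNReal.ofReal |cross q.1 q.2|)
      (by unfold cross; fun_prop)).trans lintegral_abs_cross_gaussianReal_prod
  have hF : Measurable fun p ↦ ENNReal.ofReal |doubleSignedArea p| :=
    (by unfold doubleSignedArea cross; fun_prop : Continuous _).measurable.ennreal_ofReal
  calc _ = ∫⁻ p, ENNReal.ofReal
        |doubleSignedArea (rotate₁₂ (π / 4) (rotate₂₃ (arctan √2) p))| ∂μ6 := by
        rw [hR₂.lintegral_comp (f := fun p ↦ ENNReal.ofReal |doubleSignedArea (rotate₁₂ (π / 4) p)|)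
          (hF.comp hR₁.measurable), hR₁.lintegral_comp hF]
    _ = ∫⁻ p, ENNReal.ofReal √3 * ENNReal.ofReal |cross p.1 p.2.1| ∂μ6 := by
        simp_rw [doubleSignedArea_rotate, abs_mul, abs_of_nonneg (sqrt_nonneg _),
          ENNReal.ofReal_mul (sqrt_nonneg _)]
    _ = ENNReal.ofReal √3 := by
        rw [lintegral_const_mul _ (by unfold cross; fun_prop), hmarg, mul_one]

theorem expected_area_triangle :
    ∫ p : (ℝ × ℝ) × (ℝ × ℝ) × (ℝ × ℝ),
      (1/2) * |(p.2.1.1 - p.1.1) * (p.2.2.2 - p.1.2) -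
               (p.2.1.2 - p.1.2) * (p.2.2.1 - p.1.1)| ∂μ6
    = Real.sqrt 3 / 2 := by
  change ∫ p, (1 / 2) * |doubleSignedArea p| ∂μ6 = √3 / 2
  rw [integral_const_mul, integral_eq_lintegral_of_nonneg_ae (ae_of_all _ fun _ ↦ abs_nonneg _)
    (by unfold doubleSignedArea cross; fun_prop : Continuous _).aestronglyMeasurable,
    lintegral_abs_doubleSignedArea,
    ENNReal.toReal_ofReal (sqrt_nonneg _)]
  ring
end
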